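/- Let D = diag(1, d) with d > 0, d ≠ 1, and A = [[0, −1], [1, 0]]. For any p ∈ (0, π/4) with p < arccos(2√d/(d+1)), the function τ ↦ r(D e^{τA}) is strongly concave on [0, p] (i.e., its negative is strongly convex with some positive parameter). In particular, τ ↦ r(D e^{τA}) is not convex on [0, ∞). -/

import Mathlib

open Matrix

/-- Diagonally symmetrizable: `T⁻¹ * A * T` symmetric for some invertible diagonal `T`. -/
def IsDiagSymmetrizable {N : ℕ} (A : Matrix (Fin N) (Fin N) ℝ) : Prop :=
  ∃ d : Fin N → ℝ, (∀ i, d i ≠ 0) ∧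
    ((Matrix.diagonal d)⁻¹ * A * Matrix.diagonal d).IsSymm

/-- The spectral radius of a real matrix: the largest modulus of its (complex) eigenvalues. -/
noncomputable def specRad {N : ℕ} (M : Matrix (Fin N) (Fin N) ℝ) : ℝ :=
  sSup ((‖·‖) '' spectrum ℂ (M.map (algebraMap ℝ ℂ)))

/-- The matrix exponential. -/
noncomputable def mexp {N : ℕ} (M : Matrix (Fin N) (Fin N) ℝ) : Matrix (Fin N) (Fin N) ℝ :=
  NormedSpace.exp M

/-- ℂ → M₂(ℝ) as a ring hom. -/
noncomputable def cmHom : ℂ →+* Matrix (Fin 2) (Fin 2) ℝ where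
  toFun z := !![z.re, -z.im; z.im, z.re]
  map_one' := by ext i j; fin_cases i <;> fin_cases j <;> simp
  map_mul' z w := by
    ext i j
    fin_cases i <;> fin_cases j <;>
      simp [Matrix.mul_apply, Fin.sum_univ_succ, Complex.mul_re, Complex.mul_im] <;> ring
  map_zero' := by ext i j; fin_cases i <;> fin_cases j <;> simp
  map_add' z w := by ext i j; fin_cases i <;> fin_cases j <;> simp <;> ring

lemma cmHom_cont : Continuous cmHom := by
  apply continuous_matrix
  intro i j
  fin_cases i <;> fin_cases j <;> simp [cmHom] <;> fun_prop

lemma exp_rot (τ : ℝ) :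
    mexp (τ • (!![0, -1; 1, 0] : Matrix (Fin 2) (Fin 2) ℝ)) =
      !![Real.cos τ, -Real.sin τ; Real.sin τ, Real.cos τ] := by
  letI : SeminormedRing (Matrix (Fin 2) (Fin 2) ℝ) := Matrix.linftyOpSemiNormedRing
  letI : NormedRing (Matrix (Fin 2) (Fin 2) ℝ) := Matrix.linftyOpNormedRing
  letI : NormedAlgebra ℝ (Matrix (Fin 2) (Fin 2) ℝ) := Matrix.linftyOpNormedAlgebra
  have h1 : τ • (!![0, -1; 1, 0] : Matrix (Fin 2) (Fin 2) ℝ) = cmHom ((τ : ℂ) * Complex.I) := by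
    ext i j; fin_cases i <;> fin_cases j <;> simp [cmHom]
  rw [mexp, h1]
  erw [← NormedSpace.map_exp cmHom cmHom_cont]
  rw [← Complex.exp_eq_exp_ℂ]
  ext i j
  fin_cases i <;> fin_cases j <;>
    simp [cmHom, Complex.exp_ofReal_mul_I_re, Complex.exp_ofReal_mul_I_im]

lemma spec_fin_two (M : Matrix (Fin 2) (Fin 2) ℂ) (z : ℂ) :
    z ∈ spectrum ℂ M ↔ (z - M 0 0) * (z - M 1 1) - M 0 1 * M 1 0 = 0 := by
  rw [spectrum.mem_iff]
  rw [Matrix.isUnit_iff_isUnit_det, isUnit_iff_ne_zero, not_not, Matrix.det_fin_two]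
  simp only [Matrix.sub_apply, Matrix.algebraMap_matrix_apply, Algebra.algebraMap_self_apply,
    Fin.isValue, if_true, show ((0:Fin 2) = 1) = False by simp, show ((1:Fin 2) = 0) = False by simp,
    if_false, ite_true, ite_false]
  constructor <;> intro h <;> linear_combination h

lemma spec_pair (M : Matrix (Fin 2) (Fin 2) ℂ) (l1 l2 : ℂ)
    (hsum : M 0 0 + M 1 1 = l1 + l2) (hprod : M 0 0 * M 1 1 - M 0 1 * M 1 0 = l1 * l2) :
    spectrum ℂ M = {l1, l2} := by
  ext z
  rw [spec_fin_two]
  have : (z - M 0 0) * (z - M 1 1) - M 0 1 * M 1 0 = (z - l1) * (z - l2) := by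
    linear_combination (-z) * hsum + hprod
  rw [this, mul_eq_zero, sub_eq_zero, sub_eq_zero]
  simp [Set.mem_insert_iff]

lemma specRad_eq (d τ : ℝ) (hd : 0 < d) (hc : 2 * Real.sqrt d < (d + 1) * Real.cos τ) :
    specRad (Matrix.diagonal ![1, d] * mexp (τ • !![0, -1; 1, 0])) =
      ((d + 1) * Real.cos τ + Real.sqrt ((d + 1) ^ 2 * Real.cos τ ^ 2 - 4 * d)) / 2 := by
  set c := Real.cos τ with hcdef
  set s := Real.sin τ with hsdef
  have hsq : Real.sqrt d ^ 2 = d := Real.sq_sqrt hd.le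
  have hsnn : 0 ≤ Real.sqrt d := Real.sqrt_nonneg d
  have hcpos : 0 < (d + 1) * c := lt_of_le_of_lt (by positivity) hc
  have hu : 0 < (d + 1) ^ 2 * c ^ 2 - 4 * d := by nlinarith
  set r := Real.sqrt ((d + 1) ^ 2 * c ^ 2 - 4 * d) with hrdef
  have hrnn : 0 ≤ r := Real.sqrt_nonneg _
  have hr2 : r ^ 2 = (d + 1) ^ 2 * c ^ 2 - 4 * d := Real.sq_sqrt hu.le
  have hrlt : r < (d + 1) * c := by nlinarith
  set l1 := ((d + 1) * c + r) / 2 with hl1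
  set l2 := ((d + 1) * c - r) / 2 with hl2
  have hl2nn : 0 ≤ l2 := by rw [hl2]; linarith
  have hl1nn : 0 ≤ l1 := by rw [hl1]; linarith
  have hle : l2 ≤ l1 := by rw [hl1, hl2]; linarith
  have hM : Matrix.diagonal ![1, d] * mexp (τ • !![0, -1; 1, 0]) = !![c, -s; d * s, d * c] := by
    rw [exp_rot]
    ext i j
    fin_cases i <;> fin_cases j <;>
      simp [Matrix.mul_apply, Fin.sum_univ_succ, Matrix.diagonal, hcdef, hsdef]
  have hmap : (!![c, -s; d * s, d * c]).map (algebraMap ℝ ℂ) =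
      !![(c : ℂ), -s; d * s, d * c] := by
    ext i j
    fin_cases i <;> fin_cases j <;> simp [Matrix.map_apply]
  have hpyth : s ^ 2 + c ^ 2 = 1 := Real.sin_sq_add_cos_sq τ
  have hprodR : c * (d * c) - -s * (d * s) = l1 * l2 := by
    rw [hl1, hl2]
    linear_combination d * hpyth + (1 / 4 : ℝ) * hr2
  have hspec : spectrum ℂ ((!![c, -s; d * s, d * c]).map (algebraMap ℝ ℂ)) =
      {(l1 : ℂ), (l2 : ℂ)} := by
    rw [hmap]
    apply spec_pair
    · show (c : ℂ) + (d : ℂ) * (c : ℂ) = (l1 : ℂ) + (l2 : ℂ)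
      rw [hl1, hl2]; push_cast; ring
    · show (c : ℂ) * ((d : ℂ) * (c : ℂ)) - -(s : ℂ) * ((d : ℂ) * (s : ℂ)) = (l1 : ℂ) * (l2 : ℂ)
      have h2 : ((c * (d * c) - -s * (d * s) : ℝ) : ℂ) = ((l1 * l2 : ℝ) : ℂ) := by
        exact_mod_cast congrArg (fun x : ℝ => (x : ℂ)) hprodR
      push_cast at h2
      linear_combination h2
  rw [specRad, hM, hspec, Set.image_pair, Complex.norm_real, Complex.norm_real, Real.norm_eq_abs, Real.norm_eq_abs,
    abs_of_nonneg hl1nn, abs_of_nonneg hl2nn, csSup_pair, sup_eq_left.mpr hle]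

lemma strong_aux {d p : ℝ} (hd : 0 < d) (hd1 : d ≠ 1) (hp0 : 0 < p) (hpπ : p < Real.pi / 4)
    (key : 2 * Real.sqrt d < (d + 1) * Real.cos p) :
    StrongConvexOn (Set.Icc (0 : ℝ) p) ((d + 1) * Real.cos p / 2)
      (fun τ => -(((d + 1) * Real.cos τ +
        Real.sqrt ((d + 1) ^ 2 * Real.cos τ ^ 2 - 4 * d)) / 2)) := by
  have hppi : p ≤ Real.pi := by
    have := Real.pi_pos; linarith
  set m : ℝ := (d + 1) * Real.cos p / 2 with hm
  set u : ℝ → ℝ := fun τ => (d + 1) ^ 2 * Real.cos τ ^ 2 - 4 * d with hu_def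
  set h : ℝ → ℝ := fun τ => Real.sqrt (u τ) with hh_def
  set F : ℝ → ℝ := fun τ => ((d + 1) * Real.cos τ + h τ) / 2 with hF_def
  set G : ℝ → ℝ := fun τ => -F τ - m / 2 * τ ^ 2 with hG_def
  set G1 : ℝ → ℝ := fun x => (d + 1) * Real.sin x / 2 +
    (d + 1) ^ 2 * (Real.cos x * Real.sin x) / (2 * h x) - m * x with hG1_def
  set G2 : ℝ → ℝ := fun x => (d + 1) * Real.cos x / 2 +
    (d + 1) ^ 2 * ((Real.cos x ^ 2 - Real.sin x ^ 2) * u x +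
      (d + 1) ^ 2 * Real.cos x ^ 2 * Real.sin x ^ 2) / (2 * (u x * h x)) - m with hG2_def
  -- u is positive on [0, p]
  have hu_pos : ∀ τ ∈ Set.Icc (0 : ℝ) p, 0 < u τ := by
    intro τ hτ
    have hcp : Real.cos p ≤ Real.cos τ :=
      Real.cos_le_cos_of_nonneg_of_le_pi hτ.1 hppi hτ.2
    have h1 : 2 * Real.sqrt d < (d + 1) * Real.cos τ := by nlinarith
    have := Real.sq_sqrt hd.le
    have := Real.sqrt_nonneg d
    simp only [hu_def]
    nlinarith
  -- first derivative
  have hG : ∀ x, 0 < u x → HasDerivAt G (G1 x) x := by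
    intro x hx
    have hhx : 0 < h x := Real.sqrt_pos.mpr hx
    have hu' : HasDerivAt u ((d + 1) ^ 2 * (2 * Real.cos x ^ 1 * (-Real.sin x))) x :=
      (((Real.hasDerivAt_cos x).pow 2).const_mul ((d + 1) ^ 2)).sub_const (4 * d)
    have hh : HasDerivAt h
        ((d + 1) ^ 2 * (2 * Real.cos x ^ 1 * (-Real.sin x)) / (2 * h x)) x :=
      hu'.sqrt hx.ne'
    have hFd : HasDerivAt F (((d + 1) * (-Real.sin x) +
        (d + 1) ^ 2 * (2 * Real.cos x ^ 1 * (-Real.sin x)) / (2 * h x)) / 2) x :=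
      (((Real.hasDerivAt_cos x).const_mul (d + 1)).add hh).div_const 2
    have hq : HasDerivAt (fun y : ℝ => m / 2 * y ^ 2) (m / 2 * (2 * x ^ 1)) x :=
      (hasDerivAt_pow 2 x).const_mul (m / 2)
    have htot := hFd.neg.sub hq
    refine htot.congr_deriv (Eq.symm ?_)
    simp only [hG1_def]
    field_simp
    ring
  -- second derivative
  have hG1' : ∀ x, 0 < u x → HasDerivAt G1 (G2 x) x := by
    intro x hx
    have hhx : 0 < h x := Real.sqrt_pos.mpr hx
    have hu' : HasDerivAt u ((d + 1) ^ 2 * (2 * Real.cos x ^ 1 * (-Real.sin x))) x :=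
      (((Real.hasDerivAt_cos x).pow 2).const_mul ((d + 1) ^ 2)).sub_const (4 * d)
    have hh : HasDerivAt h
        ((d + 1) ^ 2 * (2 * Real.cos x ^ 1 * (-Real.sin x)) / (2 * h x)) x :=
      hu'.sqrt hx.ne'
    have hA1 : HasDerivAt (fun y => (d + 1) * Real.sin y / 2) ((d + 1) * Real.cos x / 2) x :=
      ((Real.hasDerivAt_sin x).const_mul (d + 1)).div_const 2
    have hn : HasDerivAt (fun y => (d + 1) ^ 2 * (Real.cos y * Real.sin y))
        ((d + 1) ^ 2 * (-Real.sin x * Real.sin x + Real.cos x * Real.cos x)) x :=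
      ((Real.hasDerivAt_cos x).mul (Real.hasDerivAt_sin x)).const_mul ((d + 1) ^ 2)
    have hg : HasDerivAt (fun y => 2 * h y)
        (2 * ((d + 1) ^ 2 * (2 * Real.cos x ^ 1 * (-Real.sin x)) / (2 * h x))) x :=
      hh.const_mul 2
    have h2h : (2 : ℝ) * h x ≠ 0 := by positivity
    have hA2 := hn.div hg h2h
    have hid : HasDerivAt (fun y : ℝ => m * y) m x := by
      simpa using (hasDerivAt_id x).const_mul m
    have htot := (hA1.add hA2).sub hid
    refine htot.congr_deriv (Eq.symm ?_)
    have hsq : h x ^ 2 = u x := Real.sq_sqrt hx.le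
    simp only [hG2_def]
    set U := u x with hU
    set H := h x with hH
    rw [← hsq]
    field_simp
    ring
  -- second derivative nonneg on the interior
  have hG2nn : ∀ x ∈ Set.Ioo (0 : ℝ) p, 0 ≤ G2 x := by
    intro x hx
    have hxI : x ∈ Set.Icc (0 : ℝ) p := ⟨hx.1.le, hx.2.le⟩
    have hux : 0 < u x := hu_pos x hxI
    have hhx : 0 < h x := Real.sqrt_pos.mpr hux
    have hcp : Real.cos p ≤ Real.cos x :=
      Real.cos_le_cos_of_nonneg_of_le_pi hx.1.le hppi hx.2.le
    have hpy : Real.sin x ^ 2 = 1 - Real.cos x ^ 2 := Real.sin_sq x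
    have hud : u x = (d + 1) ^ 2 * Real.cos x ^ 2 - 4 * d := rfl
    have hdsq : 0 < (d - 1) ^ 2 := by
      have : d - 1 ≠ 0 := sub_ne_zero.mpr hd1
      positivity
    have hE2 : 0 < (d + 1) ^ 2 := by positivity
    have hNid : (d + 1) ^ 2 * ((Real.cos x ^ 2 - Real.sin x ^ 2) * u x +
        (d + 1) ^ 2 * Real.cos x ^ 2 * Real.sin x ^ 2)
        = ((d + 1) ^ 2 * Real.cos x ^ 2 - 4 * d) ^ 2 + 4 * d * (d - 1) ^ 2 := by
      rw [hud]
      linear_combination (4 * d * (d + 1) ^ 2) * hpy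
    have hN : 0 < (Real.cos x ^ 2 - Real.sin x ^ 2) * u x +
        (d + 1) ^ 2 * Real.cos x ^ 2 * Real.sin x ^ 2 := by
      nlinarith [hNid, sq_nonneg ((d + 1) ^ 2 * Real.cos x ^ 2 - 4 * d), mul_pos hd hdsq, hE2]
    have hterm : 0 < (d + 1) ^ 2 * ((Real.cos x ^ 2 - Real.sin x ^ 2) * u x +
        (d + 1) ^ 2 * Real.cos x ^ 2 * Real.sin x ^ 2) / (2 * (u x * h x)) := by
      positivity
    simp only [hG2_def, hm]
    nlinarith
  -- plumbing
  have hopen : IsOpen {x : ℝ | 0 < u x} := by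
    have hcont : Continuous u := by
      simp only [hu_def]; fun_prop
    exact isOpen_lt continuous_const hcont
  have hderivG : ∀ x ∈ {x : ℝ | 0 < u x}, deriv G x = G1 x := fun x hx => (hG x hx).deriv
  have hconv : ConvexOn ℝ (Set.Icc (0 : ℝ) p) G := by
    apply convexOn_of_deriv2_nonneg (convex_Icc 0 p)
    · intro x hx
      exact ((hG x (hu_pos x hx)).continuousAt).continuousWithinAt
    · intro x hx
      rw [interior_Icc] at hx
      exact ((hG x (hu_pos x ⟨hx.1.le, hx.2.le⟩)).differentiableAt).differentiableWithinAt
    · intro x hx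
      rw [interior_Icc] at hx
      have hux : 0 < u x := hu_pos x ⟨hx.1.le, hx.2.le⟩
      have hev : deriv G =ᶠ[nhds x] G1 :=
        Filter.eventuallyEq_of_mem (hopen.mem_nhds hux) hderivG
      exact (((hG1' x hux).congr_of_eventuallyEq hev).differentiableAt).differentiableWithinAt
    · intro x hx
      rw [interior_Icc] at hx
      have hux : 0 < u x := hu_pos x ⟨hx.1.le, hx.2.le⟩
      have hev : deriv G =ᶠ[nhds x] G1 :=
        Filter.eventuallyEq_of_mem (hopen.mem_nhds hux) hderivG
      have hd2 : HasDerivAt (deriv G) (G2 x) x := (hG1' x hux).congr_of_eventuallyEq hev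
      have : deriv^[2] G x = G2 x := by
        simp only [Function.iterate_succ, Function.iterate_zero, Function.comp, id]
        exact hd2.deriv
      rw [this]
      exact hG2nn x hx
  refine strongConvexOn_iff_convex.mpr ?_
  have heq : (fun x : ℝ => -(((d + 1) * Real.cos x +
      Real.sqrt ((d + 1) ^ 2 * Real.cos x ^ 2 - 4 * d)) / 2) - m / 2 * ‖x‖ ^ 2) = G := by
    funext y
    simp only [hG_def, hF_def, hh_def, hu_def, Real.norm_eq_abs, sq_abs]
  rw [heq]
  exact hconv

theorem stmt_11 (d : ℝ) (hd : 0 < d) (hd1 : d ≠ 1) (p : ℝ)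
    (hp : p ∈ Set.Ioo 0 (Real.pi / 4))
    (hp' : p < Real.arccos (2 * Real.sqrt d / (d + 1))) :
    let D : Matrix (Fin 2) (Fin 2) ℝ := Matrix.diagonal ![1, d]
    let A : Matrix (Fin 2) (Fin 2) ℝ := !![0, -1; 1, 0]
    (∃ m : ℝ, 0 < m ∧
      StrongConvexOn (Set.Icc (0 : ℝ) p) m
        (fun τ : ℝ => -specRad (D * mexp (τ • A)))) ∧
    ¬ ConvexOn ℝ (Set.Ici (0 : ℝ)) (fun τ : ℝ => specRad (D * mexp (τ • A))) := by
  intro D A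
  obtain ⟨hp0, hpπ⟩ := hp
  have hppi : p ≤ Real.pi := by have := Real.pi_pos; linarith
  have hsd : 0 ≤ Real.sqrt d := Real.sqrt_nonneg d
  have hsq : Real.sqrt d ^ 2 = d := Real.sq_sqrt hd.le
  have hx1 : 2 * Real.sqrt d / (d + 1) ≤ 1 := by
    rw [div_le_one (by linarith)]
    nlinarith [sq_nonneg (Real.sqrt d - 1)]
  have hxm1 : -1 ≤ 2 * Real.sqrt d / (d + 1) := by
    have : (0:ℝ) ≤ 2 * Real.sqrt d / (d + 1) := by positivity
    linarith
  have hcosp : 2 * Real.sqrt d / (d + 1) < Real.cos p := by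
    have h1 := Real.strictAntiOn_cos ⟨hp0.le, hppi⟩
      ⟨Real.arccos_nonneg _, Real.arccos_le_pi _⟩ hp'
    rwa [Real.cos_arccos hxm1 hx1] at h1
  have key : 2 * Real.sqrt d < (d + 1) * Real.cos p := by
    have := (div_lt_iff₀ (show (0:ℝ) < d + 1 by linarith)).mp hcosp
    linarith
  have hEq : ∀ τ ∈ Set.Icc (0:ℝ) p, specRad (D * mexp (τ • A)) =
      ((d + 1) * Real.cos τ + Real.sqrt ((d + 1) ^ 2 * Real.cos τ ^ 2 - 4 * d)) / 2 := by
    intro τ hτ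
    have hcp : Real.cos p ≤ Real.cos τ := Real.cos_le_cos_of_nonneg_of_le_pi hτ.1 hppi hτ.2
    have hlt : 2 * Real.sqrt d < (d + 1) * Real.cos τ := by nlinarith
    exact specRad_eq d τ hd hlt
  set m := (d + 1) * Real.cos p / 2 with hm
  have hmpos : 0 < m := by
    have h0 : (0:ℝ) ≤ 2 * Real.sqrt d / (d + 1) := by positivity
    have : 0 < Real.cos p := lt_of_le_of_lt h0 hcosp
    rw [hm]; positivity
  have hstrong : StrongConvexOn (Set.Icc (0 : ℝ) p) m
      (fun τ : ℝ => -specRad (D * mexp (τ • A))) := by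
    have h0 := strong_aux hd hd1 hp0 hpπ key
    refine ⟨h0.1, fun x hx y hy a b ha hb hab => ?_⟩
    have hmem := h0.1 hx hy ha hb hab
    have hineq := h0.2 hx hy ha hb hab
    simp only at hineq ⊢
    rw [hEq _ hmem, hEq _ hx, hEq _ hy]
    exact hineq
  refine ⟨⟨m, hmpos, hstrong⟩, ?_⟩
  intro hconv
  have hhalf : (0:ℝ) ≤ (1:ℝ)/2 := by norm_num
  have hsum : (1:ℝ)/2 + 1/2 = 1 := by norm_num
  have h1 := hconv.2 Set.self_mem_Ici (Set.mem_Ici.mpr hp0.le) hhalf hhalf hsum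
  have h2 := hstrong.2 (Set.left_mem_Icc.mpr hp0.le) (Set.right_mem_Icc.mpr hp0.le)
    hhalf hhalf hsum
  simp only [smul_eq_mul] at h1 h2
  have hnorm : ‖(0:ℝ) - p‖ = p := by
    rw [zero_sub, norm_neg, Real.norm_eq_abs, abs_of_pos hp0]
  rw [hnorm] at h2
  have hmp : 0 < m / 2 * p ^ 2 := by positivity
  nlinarith [h1, h2, hmp]
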